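/- Let V be a module over ℂ, let n ≥ 1, and let a, A, b, B : Fin n → V. In the exterior algebra Λ = ExteriorAlgebra ℂ V with canonical embedding ι : V → Λ, assume ∑_{γ : Fin n} ι(a γ)·ι(B γ) = 0 and ∑_{γ : Fin n} ι(A γ)·ι(b γ) = 0. Define the n × n matrix Θ over Λ by Θ i j := I•(ι(a i)·ι(B j)) − I•(ι(b i)·ι(A j)), where I = Complex.I, and set S := ∑_{γ} ι(B γ)·ι(b γ) and E := ∑_{γ} ι(A γ)·ι(a γ). Then for every natural number s ≥ 1 and all indices i, j, the (i, j) entry of the matrix power Θ^{2s} equals (S·E)^{s−1} · ( S·(ι(a i)·ι(A j)) + E·(ι(b i)·ι(B j)) ). -/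
import Mathlib

open ExteriorAlgebra

section Aux

variable {V : Type*} [AddCommGroup V] [Module ℂ V]

private lemma anti (x y : V) : ι ℂ x * ι ℂ y = -(ι ℂ y * ι ℂ x) :=
  eq_neg_of_add_eq_zero_left (ι_add_mul_swap x y)

private lemma pair_comm (x y z : V) : Commute (ι ℂ x * ι ℂ y) (ι ℂ z) := by
  show ι ℂ x * ι ℂ y * ι ℂ z = ι ℂ z * (ι ℂ x * ι ℂ y)
  calc ι ℂ x * ι ℂ y * ι ℂ z = ι ℂ x * (ι ℂ y * ι ℂ z) := mul_assoc _ _ _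
    _ = -(ι ℂ x * (ι ℂ z * ι ℂ y)) := by rw [anti y z]; simp
    _ = -((ι ℂ x * ι ℂ z) * ι ℂ y) := by rw [mul_assoc]
    _ = (ι ℂ z * ι ℂ x) * ι ℂ y := by rw [anti x z]; simp
    _ = ι ℂ z * (ι ℂ x * ι ℂ y) := mul_assoc _ _ _

private lemma rearr (c d : ExteriorAlgebra ℂ V) (x y z t : V)
    (hd : ∀ v : V, Commute d (ι ℂ v)) :
    (c * (ι ℂ x * ι ℂ y)) * (d * (ι ℂ z * ι ℂ t)) =
      (c * d) * (ι ℂ x * (ι ℂ y * ι ℂ z) * ι ℂ t) := by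
  have hdp : (ι ℂ x * ι ℂ y) * d = d * (ι ℂ x * ι ℂ y) :=
    ((hd x).mul_right (hd y)).eq.symm
  calc (c * (ι ℂ x * ι ℂ y)) * (d * (ι ℂ z * ι ℂ t))
      = c * ((ι ℂ x * ι ℂ y) * d) * (ι ℂ z * ι ℂ t) := by noncomm_ring
    _ = c * (d * (ι ℂ x * ι ℂ y)) * (ι ℂ z * ι ℂ t) := by rw [hdp]
    _ = (c * d) * (ι ℂ x * (ι ℂ y * ι ℂ z) * ι ℂ t) := by noncomm_ring

end Aux

set_option maxHeartbeats 1000000 in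
/-- even powers of the matrix `Θ` in the exterior algebra. -/
theorem even_pow_Theta {V : Type*} [AddCommGroup V] [Module ℂ V]
    (n : ℕ) (hn : 1 ≤ n) (a A b B : Fin n → V)
    (h1 : ∑ γ : Fin n, ι ℂ (a γ) * ι ℂ (B γ) = 0)
    (h2 : ∑ γ : Fin n, ι ℂ (A γ) * ι ℂ (b γ) = 0)
    (Θ : Matrix (Fin n) (Fin n) (ExteriorAlgebra ℂ V))
    (hΘ : ∀ i j, Θ i j =
        Complex.I • (ι ℂ (a i) * ι ℂ (B j)) - Complex.I • (ι ℂ (b i) * ι ℂ (A j)))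
    (S E : ExteriorAlgebra ℂ V)
    (hS : S = ∑ γ : Fin n, ι ℂ (B γ) * ι ℂ (b γ))
    (hE : E = ∑ γ : Fin n, ι ℂ (A γ) * ι ℂ (a γ)) :
    ∀ (s : ℕ), 1 ≤ s → ∀ (i j : Fin n),
      (Θ ^ (2 * s)) i j =
        (S * E) ^ (s - 1) *
          (S * (ι ℂ (a i) * ι ℂ (A j)) + E * (ι ℂ (b i) * ι ℂ (B j))) := by
  -- basic commutation facts
  have hS1 : ∀ v : V, Commute S (ι ℂ v) := by
    intro v; rw [hS]
    exact Commute.sum_left _ _ _ fun γ _ => pair_comm _ _ _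
  have hE1 : ∀ v : V, Commute E (ι ℂ v) := by
    intro v; rw [hE]
    exact Commute.sum_left _ _ _ fun γ _ => pair_comm _ _ _
  have hSp : ∀ x y : V, Commute S (ι ℂ x * ι ℂ y) := fun x y => (hS1 x).mul_right (hS1 y)
  have hEp : ∀ x y : V, Commute E (ι ℂ x * ι ℂ y) := fun x y => (hE1 x).mul_right (hE1 y)
  have hSE : Commute S E := by
    rw [hE]; exact Commute.sum_right _ _ _ fun γ _ => hSp _ _
  have h1' : ∑ γ : Fin n, ι ℂ (B γ) * ι ℂ (a γ) = 0 := by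
    have : ∑ γ : Fin n, ι ℂ (B γ) * ι ℂ (a γ)
        = -∑ γ : Fin n, ι ℂ (a γ) * ι ℂ (B γ) := by
      rw [← Finset.sum_neg_distrib]
      exact Finset.sum_congr rfl fun γ _ => anti _ _
    rw [this, h1, neg_zero]
  -- the square of Θ
  have hsq : ∀ i j, (Θ ^ 2) i j =
      S * (ι ℂ (a i) * ι ℂ (A j)) + E * (ι ℂ (b i) * ι ℂ (B j)) := by
    intro i j
    have step1 : ∀ γ, Θ i γ * Θ γ j =
        -(ι ℂ (a i) * (ι ℂ (B γ) * ι ℂ (a γ)) * ι ℂ (B j))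
        + ι ℂ (a i) * (ι ℂ (B γ) * ι ℂ (b γ)) * ι ℂ (A j)
        + ι ℂ (b i) * (ι ℂ (A γ) * ι ℂ (a γ)) * ι ℂ (B j)
        - ι ℂ (b i) * (ι ℂ (A γ) * ι ℂ (b γ)) * ι ℂ (A j) := by
      intro γ
      rw [hΘ i γ, hΘ γ j]
      simp only [sub_mul, mul_sub, smul_mul_assoc, mul_smul_comm, smul_smul,
        smul_sub, smul_add, smul_neg, Complex.I_mul_I, neg_one_smul]
      noncomm_ring
    calc (Θ ^ 2) i j = ∑ γ : Fin n, Θ i γ * Θ γ j := by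
          rw [pow_two, Matrix.mul_apply]
      _ = ∑ γ : Fin n,
          (-(ι ℂ (a i) * (ι ℂ (B γ) * ι ℂ (a γ)) * ι ℂ (B j))
          + ι ℂ (a i) * (ι ℂ (B γ) * ι ℂ (b γ)) * ι ℂ (A j)
          + ι ℂ (b i) * (ι ℂ (A γ) * ι ℂ (a γ)) * ι ℂ (B j)
          - ι ℂ (b i) * (ι ℂ (A γ) * ι ℂ (b γ)) * ι ℂ (A j)) :=
          Finset.sum_congr rfl fun γ _ => step1 γ
      _ = -(ι ℂ (a i) * (∑ γ : Fin n, ι ℂ (B γ) * ι ℂ (a γ)) * ι ℂ (B j))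
          + ι ℂ (a i) * (∑ γ : Fin n, ι ℂ (B γ) * ι ℂ (b γ)) * ι ℂ (A j)
          + ι ℂ (b i) * (∑ γ : Fin n, ι ℂ (A γ) * ι ℂ (a γ)) * ι ℂ (B j)
          - ι ℂ (b i) * (∑ γ : Fin n, ι ℂ (A γ) * ι ℂ (b γ)) * ι ℂ (A j) := by
          simp only [Finset.mul_sum, Finset.sum_mul, Finset.sum_neg_distrib,
            Finset.sum_add_distrib, Finset.sum_sub_distrib]
      _ = ι ℂ (a i) * S * ι ℂ (A j) + ι ℂ (b i) * E * ι ℂ (B j) := by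
          rw [h1', h2, ← hS, ← hE]
          simp only [mul_zero, zero_mul, neg_zero, zero_add, add_zero, sub_zero]
      _ = S * (ι ℂ (a i) * ι ℂ (A j)) + E * (ι ℂ (b i) * ι ℂ (B j)) := by
          rw [← (hS1 (a i)).eq, ← (hE1 (b i)).eq,
            mul_assoc S (ι ℂ (a i)) (ι ℂ (A j)), mul_assoc E (ι ℂ (b i)) (ι ℂ (B j))]
  -- key product identity
  have hM : ∀ i j, (∑ γ : Fin n,
      (S * (ι ℂ (a i) * ι ℂ (A γ)) + E * (ι ℂ (b i) * ι ℂ (B γ)))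
        * (S * (ι ℂ (a γ) * ι ℂ (A j)) + E * (ι ℂ (b γ) * ι ℂ (B j))))
      = (S * E) * (S * (ι ℂ (a i) * ι ℂ (A j)) + E * (ι ℂ (b i) * ι ℂ (B j))) := by
    intro i j
    have step2 : ∀ γ : Fin n,
        (S * (ι ℂ (a i) * ι ℂ (A γ)) + E * (ι ℂ (b i) * ι ℂ (B γ)))
          * (S * (ι ℂ (a γ) * ι ℂ (A j)) + E * (ι ℂ (b γ) * ι ℂ (B j)))
        = (S * S) * (ι ℂ (a i) * (ι ℂ (A γ) * ι ℂ (a γ)) * ι ℂ (A j))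
        + (S * E) * (ι ℂ (a i) * (ι ℂ (A γ) * ι ℂ (b γ)) * ι ℂ (B j))
        + (E * S) * (ι ℂ (b i) * (ι ℂ (B γ) * ι ℂ (a γ)) * ι ℂ (A j))
        + (E * E) * (ι ℂ (b i) * (ι ℂ (B γ) * ι ℂ (b γ)) * ι ℂ (B j)) := by
      intro γ
      rw [add_mul, mul_add, mul_add,
        rearr S S _ _ _ _ hS1, rearr S E _ _ _ _ hE1,
        rearr E S _ _ _ _ hS1, rearr E E _ _ _ _ hE1]
      noncomm_ring
    calc (∑ γ : Fin n,
        (S * (ι ℂ (a i) * ι ℂ (A γ)) + E * (ι ℂ (b i) * ι ℂ (B γ)))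
          * (S * (ι ℂ (a γ) * ι ℂ (A j)) + E * (ι ℂ (b γ) * ι ℂ (B j))))
        = (S * S) * (ι ℂ (a i) * (∑ γ : Fin n, ι ℂ (A γ) * ι ℂ (a γ)) * ι ℂ (A j))
        + (S * E) * (ι ℂ (a i) * (∑ γ : Fin n, ι ℂ (A γ) * ι ℂ (b γ)) * ι ℂ (B j))
        + (E * S) * (ι ℂ (b i) * (∑ γ : Fin n, ι ℂ (B γ) * ι ℂ (a γ)) * ι ℂ (A j))
        + (E * E) * (ι ℂ (b i) * (∑ γ : Fin n, ι ℂ (B γ) * ι ℂ (b γ)) * ι ℂ (B j)) := by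
          rw [Finset.sum_congr rfl fun γ _ => step2 γ]
          simp only [Finset.mul_sum, Finset.sum_mul, Finset.sum_add_distrib]
      _ = (S * S) * (ι ℂ (a i) * E * ι ℂ (A j))
          + (E * E) * (ι ℂ (b i) * S * ι ℂ (B j)) := by
          rw [h2, h1', ← hS, ← hE]
          simp only [mul_zero, zero_mul, add_zero, zero_add]
      _ = (S * S) * (E * (ι ℂ (a i) * ι ℂ (A j)))
          + (E * E) * (S * (ι ℂ (b i) * ι ℂ (B j))) := by
          rw [← (hE1 (a i)).eq, ← (hS1 (b i)).eq,
            mul_assoc E (ι ℂ (a i)) (ι ℂ (A j)), mul_assoc S (ι ℂ (b i)) (ι ℂ (B j))]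
      _ = (S * E) * (S * (ι ℂ (a i) * ι ℂ (A j)) + E * (ι ℂ (b i) * ι ℂ (B j))) := by
          rw [mul_add]
          congr 1
          · calc (S * S) * (E * (ι ℂ (a i) * ι ℂ (A j)))
                = (S * S * E) * (ι ℂ (a i) * ι ℂ (A j)) := (mul_assoc _ _ _).symm
              _ = (S * E * S) * (ι ℂ (a i) * ι ℂ (A j)) := by
                  rw [mul_assoc S S E, mul_assoc S E S, hSE.eq]
              _ = (S * E) * (S * (ι ℂ (a i) * ι ℂ (A j))) := mul_assoc _ _ _
          · calc (E * E) * (S * (ι ℂ (b i) * ι ℂ (B j)))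
                = (E * E * S) * (ι ℂ (b i) * ι ℂ (B j)) := (mul_assoc _ _ _).symm
              _ = (S * E * E) * (ι ℂ (b i) * ι ℂ (B j)) := by
                  rw [mul_assoc E E S, ← hSE.eq, mul_assoc S E E,
                    ← mul_assoc E S E, ← hSE.eq, mul_assoc S E E]
              _ = (S * E) * (E * (ι ℂ (b i) * ι ℂ (B j))) := mul_assoc _ _ _
  -- commuting (S*E) past the matrix entries
  have hC : ∀ i j : Fin n, Commute (S * E)
      (S * (ι ℂ (a i) * ι ℂ (A j)) + E * (ι ℂ (b i) * ι ℂ (B j))) := by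
    intro i j
    refine Commute.add_right ?_ ?_
    · exact ((Commute.refl S).mul_left hSE.symm).mul_right ((hSp _ _).mul_left (hEp _ _))
    · exact (hSE.mul_left (Commute.refl E)).mul_right ((hSp _ _).mul_left (hEp _ _))
  -- induction
  have H : ∀ t : ℕ, ∀ i j : Fin n, (Θ ^ (2 * (t + 1))) i j =
      (S * E) ^ t * (S * (ι ℂ (a i) * ι ℂ (A j)) + E * (ι ℂ (b i) * ι ℂ (B j))) := by
    intro t
    induction t with
    | zero => intro i j; simpa using hsq i j
    | succ t ih =>
      intro i j
      have hp : Θ ^ (2 * (t + 1 + 1)) = Θ ^ 2 * Θ ^ (2 * (t + 1)) := by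
        rw [← pow_add]; ring_nf
      rw [hp, Matrix.mul_apply]
      have : ∀ γ : Fin n, (Θ ^ 2) i γ * (Θ ^ (2 * (t + 1))) γ j =
          (S * E) ^ t *
            ((S * (ι ℂ (a i) * ι ℂ (A γ)) + E * (ι ℂ (b i) * ι ℂ (B γ)))
              * (S * (ι ℂ (a γ) * ι ℂ (A j)) + E * (ι ℂ (b γ) * ι ℂ (B j)))) := by
        intro γ
        rw [hsq i γ, ih γ j, ← mul_assoc, ← ((hC i γ).pow_left t).eq, mul_assoc]
      rw [Finset.sum_congr rfl fun γ _ => this γ, ← Finset.mul_sum, hM i j,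
        ← mul_assoc, ← pow_succ]
  intro s hs i j
  obtain ⟨t, rfl⟩ : ∃ t, s = t + 1 := ⟨s - 1, (Nat.succ_pred_eq_of_pos hs).symm⟩
  simpa using H t i j
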